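/- If D is a demonstrable I-type of system F containing exactly one quantifier, then D = ∀X { X → X }. -/

import Mathlib

set_option maxHeartbeats 1000000


/-- Untyped λ-terms in de Bruijn representation. -/
inductive Trm : Type
  | var : ℕ → Trm
  | app : Trm → Trm → Trm
  | lam : Trm → Trm
  deriving DecidableEq

namespace Trm

/-- The set of free variables of a term (as de Bruijn indices). -/
def fv : Trm → Set ℕ
  | var n => {n}
  | app u v => fv u ∪ fv v
  | lam u => {n | n + 1 ∈ fv u}

/-- A term is closed if it has no free variables. -/
def Closed (t : Trm) : Prop := fv t = ∅

/-- λI-terms: abstraction is allowed only on variables occurring free in the body. -/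
inductive IsLI : Trm → Prop
  | var (n : ℕ) : IsLI (var n)
  | app {u v : Trm} : IsLI u → IsLI v → IsLI (app u v)
  | lam {u : Trm} : IsLI u → 0 ∈ fv u → IsLI (lam u)

/-- Lifting of free variables ≥ d. -/
def lift (d : ℕ) : Trm → Trm
  | var n => if n < d then var n else var (n + 1)
  | app u v => app (lift d u) (lift d v)
  | lam u => lam (lift (d + 1) u)

def liftTimes (k : ℕ) (t : Trm) : Trm := (lift 0)^[k] t

/-- Capture-avoiding substitution of the k-th free variable. -/
def subst : Trm → ℕ → Trm → Trm
  | var n, k, v => if n < k then var n else if n = k then liftTimes k v else var (n - 1)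
  | app a b, k, v => app (subst a k v) (subst b k v)
  | lam a, k, v => lam (subst a (k + 1) v)

end Trm

/-- One step of β-reduction. -/
inductive Beta : Trm → Trm → Prop
  | beta {u v : Trm} : Beta (.app (.lam u) v) (u.subst 0 v)
  | appL {u u' v : Trm} : Beta u u' → Beta (.app u v) (.app u' v)
  | appR {u v v' : Trm} : Beta v v' → Beta (.app u v) (.app u v')
  | lam {u u' : Trm} : Beta u u' → Beta (.lam u) (.lam u')

/-- One step of η-reduction: λx (u)x → u when x ∉ Fv(u). -/
inductive Eta : Trm → Trm → Prop
  | eta (u : Trm) : Eta (.lam (.app (u.lift 0) (.var 0))) u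
  | appL {u u' v : Trm} : Eta u u' → Eta (.app u v) (.app u' v)
  | appR {u v v' : Trm} : Eta v v' → Eta (.app u v) (.app u v')
  | lam {u u' : Trm} : Eta u u' → Eta (.lam u) (.lam u')

/-- β-reduction (reflexive-transitive closure). -/
def BetaStar : Trm → Trm → Prop := Relation.ReflTransGen Beta

/-- βη-reduction (reflexive-transitive closure of the union of β and η). -/
def BetaEtaStar : Trm → Trm → Prop := Relation.ReflTransGen (fun a b => Beta a b ∨ Eta a b)

/-- η-reduction (reflexive-transitive closure). -/
def EtaStar : Trm → Trm → Prop := Relation.ReflTransGen Eta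

/-- A term is β-normal iff it contains no β-redex. -/
def BetaNormal (t : Trm) : Prop := ∀ u, ¬ Beta t u

/-- A term is βη-normal iff it contains neither a β-redex nor an η-redex. -/
def BetaEtaNormal (t : Trm) : Prop := ∀ u, ¬ Beta t u ∧ ¬ Eta t u

/-- A term is strongly normalizable iff every β-reduction sequence from it is finite. -/
def StronglyNormalizable (t : Trm) : Prop :=
  ¬ ∃ f : ℕ → Trm, f 0 = t ∧ ∀ n, Beta (f n) (f (n + 1))

/-- Types of system F in de Bruijn representation. -/
inductive Ty : Type
  | var : ℕ → Ty
  | arr : Ty → Ty → Ty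
  | all : Ty → Ty
  deriving DecidableEq

namespace Ty

/-- Free type variables. -/
def tfv : Ty → Set ℕ
  | var n => {n}
  | arr A B => tfv A ∪ tfv B
  | all A => {n | n + 1 ∈ tfv A}

/-- Lifting of free type variables ≥ d. -/
def tlift (d : ℕ) : Ty → Ty
  | var n => if n < d then var n else var (n + 1)
  | arr A B => arr (tlift d A) (tlift d B)
  | all A => all (tlift (d + 1) A)

def tliftTimes (k : ℕ) (A : Ty) : Ty := (tlift 0)^[k] A

/-- Substitution of the k-th free type variable. -/
def tsubst : Ty → ℕ → Ty → Ty
  | var n, k, G => if n < k then var n else if n = k then tliftTimes k G else var (n - 1)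
  | arr A B, k, G => arr (tsubst A k G) (tsubst B k G)
  | all A, k, G => all (tsubst A (k + 1) G)

/-- Proper types: in every subtype ∀X E, the variable X occurs free in E. -/
def Proper : Ty → Prop
  | var _ => True
  | arr A B => Proper A ∧ Proper B
  | all A => Proper A ∧ 0 ∈ tfv A

/-- Closed types. -/
def ClosedTy (A : Ty) : Prop := tfv A = ∅

end Ty

/-- Typing judgments of system F (restricted to proper types:
the rule (∀e) requires X free in A and instantiates at proper types only). -/
inductive Typing : List Ty → Trm → Ty → Prop
  | ax {Γ : List Ty} {n : ℕ} {A : Ty} :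
      Γ[n]? = some A → (∀ B ∈ Γ, B.Proper) → Typing Γ (.var n) A
  | arrI {Γ : List Ty} {A B : Ty} {t : Trm} :
      A.Proper → Typing (A :: Γ) t B → Typing Γ (.lam t) (.arr A B)
  | arrE {Γ : List Ty} {A B : Ty} {u v : Trm} :
      Typing Γ u (.arr A B) → Typing Γ v A → Typing Γ (.app u v) B
  | allI {Γ : List Ty} {A : Ty} {t : Trm} :
      0 ∈ Ty.tfv A → Typing (Γ.map (Ty.tlift 0)) t A → Typing Γ t (.all A)
  | allE {Γ : List Ty} {A : Ty} {t : Trm} (G : Ty) :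
      G.Proper → 0 ∈ Ty.tfv A → Typing Γ t (.all A) → Typing Γ t (A.tsubst 0 G)

/-- A closed type D is an I-type iff every closed β-normal term of type D is a λI-term. -/
def IType (D : Ty) : Prop :=
  Ty.ClosedTy D ∧ ∀ t : Trm, BetaNormal t → Trm.Closed t → Typing [] t D → Trm.IsLI t

/-- Λ(D): the set of closed βη-normal terms of type D. -/
def Lam (D : Ty) : Set Trm :=
  {t | BetaEtaNormal t ∧ Trm.Closed t ∧ Typing [] t D}

/-- Number of second-order quantifiers occurring in a type. -/
def qCount : Ty → ℕ
  | .var _ => 0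
  | .arr A B => qCount A + qCount B
  | .all A => qCount A + 1


/-!
Closedness and `qCount D = 1` force `D = ∀X E` with `E` an implicational formula in `X` alone, and
soundness for the model of system F in `Prop` shows that `E` holds at `X := False`. In one variable,
an implicational formula false at `False` is intuitionistically equivalent to `X`, and one true at
`False` is provable; the explicit proofs of these facts (`collapse`, `ofHyp`, `inhabitant`) let us
build a closed β-normal term of type `∀X E` with a vacuous abstraction unless `E = X → X`.
-/

namespace Ty

def scons (p : Prop) (ρ : ℕ → Prop) : ℕ → Prop
  | 0 => p
  | n + 1 => ρ n

def sem : Ty → (ℕ → Prop) → Prop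
  | var n, ρ => ρ n
  | arr A B, ρ => sem A ρ → sem B ρ
  | all A, ρ => ∀ p : Prop, sem A (scons p ρ)

theorem sem_tlift (A : Ty) (d : ℕ) (ρ : ℕ → Prop) :
    sem (tlift d A) ρ = sem A (fun n => if n < d then ρ n else ρ (n + 1)) := by
  induction A generalizing d ρ with
  | var m => by_cases h : m < d <;> simp [tlift, sem, h]
  | arr A B ihA ihB => simp only [tlift, sem, ihA, ihB]
  | all A ih =>
    simp only [tlift, sem, ih]
    congr! 3 with p n
    cases n <;> simp [scons]

theorem sem_tlift_zero_scons (A : Ty) (p : Prop) (ρ : ℕ → Prop) :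
    sem (tlift 0 A) (scons p ρ) = sem A ρ := by
  rw [sem_tlift]
  rfl

theorem sem_tliftTimes_succ_scons (G : Ty) (k : ℕ) (p : Prop) (ρ : ℕ → Prop) :
    sem (tliftTimes (k + 1) G) (scons p ρ) = sem (tliftTimes k G) ρ := by
  rw [tliftTimes, Function.iterate_succ_apply', sem_tlift_zero_scons, tliftTimes]

theorem sem_tsubst (A G : Ty) (k : ℕ) (ρ : ℕ → Prop) :
    sem (tsubst A k G) ρ =
      sem A fun n =>
        if n < k then ρ n else if n = k then sem (tliftTimes k G) ρ else ρ (n - 1) := by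
  induction A generalizing k ρ with
  | var m =>
    simp only [tsubst, sem]
    split_ifs <;> rfl
  | arr A B ihA ihB => simp only [tsubst, sem, ihA, ihB]
  | all A ih =>
    simp only [tsubst, sem, ih]
    congr! 3 with p n
    rcases n with _ | n
    · rfl
    simp only [scons, Nat.add_lt_add_iff_right, Nat.add_right_cancel_iff, sem_tliftTimes_succ_scons]
    split_ifs
    · rfl
    · rfl
    · obtain ⟨m, rfl⟩ : ∃ m, n = m + 1 := ⟨n - 1, by omega⟩
      rfl

end Ty

theorem Typing.sound {Γ : List Ty} {t : Trm} {A : Ty} (h : Typing Γ t A) (ρ : ℕ → Prop)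
    (hΓ : ∀ B ∈ Γ, B.sem ρ) : A.sem ρ := by
  induction h generalizing ρ with
  | ax hget _ => exact hΓ _ (List.mem_of_getElem? hget)
  | arrI _ _ ih =>
    intro hA
    exact ih ρ (by simpa [hA] using hΓ)
  | arrE _ _ ihu ihv => exact ihu ρ hΓ (ihv ρ hΓ)
  | allI _ _ ih =>
    intro p
    refine ih (Ty.scons p ρ) fun B hB => ?_
    obtain ⟨C, hC, rfl⟩ := List.mem_map.mp hB
    rw [Ty.sem_tlift_zero_scons]
    exact hΓ C hC
  | allE G _ _ _ ih =>
    rw [Ty.sem_tsubst]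
    convert ih ρ hΓ (G.sem ρ) using 2 with n
    cases n <;> rfl

namespace Ty

def HoldsAtBot (A : Ty) : Prop := A.sem fun _ => False

theorem not_holdsAtBot_var (n : ℕ) : ¬ (var n).HoldsAtBot := id

theorem holdsAtBot_of_typing_all {t : Trm} {E : Ty} (h : Typing [] t (all E)) : E.HoldsAtBot := by
  have hbot : scons False (fun _ => False) = fun _ => False := by
    funext n
    cases n <;> rfl
  have := h.sound (fun _ => False) (by simp) False
  rwa [hbot] at this

inductive PureImp : Ty → Prop
  | var : PureImp (var 0)
  | arr {A B : Ty} : PureImp A → PureImp B → PureImp (arr A B)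

theorem PureImp.proper {A : Ty} (h : A.PureImp) : A.Proper := by
  induction h with
  | var => trivial
  | arr _ _ hA hB => exact ⟨hA, hB⟩

theorem PureImp.zero_mem_tfv {A : Ty} (h : A.PureImp) : 0 ∈ A.tfv := by
  induction h with
  | var => rfl
  | arr _ _ hA _ => exact Or.inl hA

theorem PureImp.of_qCount_eq_zero {A : Ty} (hq : qCount A = 0) (hfv : A.tfv ⊆ {0}) :
    A.PureImp := by
  induction A with
  | var n => exact (hfv rfl : n = 0) ▸ .var
  | arr A B ihA ihB =>
    simp only [qCount, Nat.add_eq_zero_iff] at hq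
    exact .arr (ihA hq.1 fun n hn => hfv (Or.inl hn)) (ihB hq.2 fun n hn => hfv (Or.inr hn))
  | all A => simp [qCount] at hq

theorem tfv_nonempty_of_qCount_eq_zero {A : Ty} (hq : qCount A = 0) : A.tfv.Nonempty := by
  induction A with
  | var n => exact ⟨n, rfl⟩
  | arr A B ihA _ =>
    obtain ⟨n, hn⟩ := ihA (by simp only [qCount] at hq; omega)
    exact ⟨n, Or.inl hn⟩
  | all A => simp [qCount] at hq

theorem exists_eq_all_pureImp {D : Ty} (hD : D.ClosedTy) (hq : qCount D = 1) :
    ∃ E, D = all E ∧ E.PureImp := by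
  have hfv : ∀ n, n ∉ D.tfv := Set.eq_empty_iff_forall_notMem.mp hD
  cases D with
  | var n => exact absurd rfl (hfv n)
  | arr A B =>
    simp only [qCount] at hq
    obtain ⟨n, hn⟩ : (arr A B).tfv.Nonempty := by
      rcases Nat.eq_zero_or_pos (qCount A) with hA | _
      · exact (tfv_nonempty_of_qCount_eq_zero hA).mono Set.subset_union_left
      · exact (tfv_nonempty_of_qCount_eq_zero (by omega)).mono Set.subset_union_right
    exact absurd hn (hfv n)
  | all E =>
    refine ⟨E, rfl, .of_qCount_eq_zero (by simpa [qCount] using hq) fun n hn => ?_⟩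
    cases n with
    | zero => rfl
    | succ m => exact absurd hn (hfv m)

end Ty

namespace Trm

open Ty

/- For `A` false at `⊥` (hence equivalent to `X`), `collapse A t` turns a proof `t` of `A` into a
proof of `X`, and `ofHyp A B j` proves `B` from the hypothesis `var j : A`, abstracting vacuously
over all premises of `B`. For `A` true at `⊥`, `inhabitant A` is a closed proof of `A`. -/
open Classical in
mutual
noncomputable def inhabitant : Ty → Trm
  | .var _ => lam (var 0)
  | .arr A B => if B.HoldsAtBot then lam (inhabitant B) else lam (ofHyp A B 0)
  | .all _ => lam (var 0)
termination_by A => sizeOf A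

noncomputable def ofHyp (A : Ty) : Ty → ℕ → Trm
  | .var _, j => collapse A (var j)
  | .arr _ C, j => lam (ofHyp A C (j + 1))
  | .all _, j => var j
termination_by B => sizeOf A + sizeOf B

noncomputable def collapse : Ty → Trm → Trm
  | .var _, t => t
  | .arr F B, t => collapse B (app t (inhabitant F))
  | .all _, t => t
termination_by A => sizeOf A
end

mutual
inductive Neutral : Trm → Prop
  | var (n : ℕ) : Neutral (var n)
  | app {u v : Trm} : Neutral u → Normal v → Neutral (app u v)

inductive Normal : Trm → Prop
  | neutral {u : Trm} : Neutral u → Normal u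
  | lam {u : Trm} : Normal u → Normal (lam u)
end

mutual
theorem Neutral.betaNormal {t : Trm} : Neutral t → BetaNormal t
  | .var _, _, h => nomatch h
  | .app hu hv, _, h => by
    cases h with
    | beta => cases hu
    | appL h => exact hu.betaNormal _ h
    | appR h => exact hv.betaNormal _ h

theorem Normal.betaNormal {t : Trm} : Normal t → BetaNormal t
  | .neutral h, _, hb => h.betaNormal _ hb
  | .lam hu, _, .lam h => hu.betaNormal _ h
end

mutual
theorem normal_inhabitant (A : Ty) : Normal (inhabitant A) := by
  cases A with
  | var => rw [inhabitant]; exact .lam (.neutral (.var 0))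
  | all => rw [inhabitant]; exact .lam (.neutral (.var 0))
  | arr A B =>
    rw [inhabitant]
    split_ifs
    · exact .lam (normal_inhabitant B)
    · exact .lam (normal_ofHyp A B 0)
termination_by sizeOf A

theorem normal_ofHyp (A B : Ty) (j : ℕ) : Normal (ofHyp A B j) := by
  cases B with
  | var => rw [ofHyp]; exact .neutral (neutral_collapse A (.var j))
  | arr F C => rw [ofHyp]; exact .lam (normal_ofHyp A C (j + 1))
  | all => rw [ofHyp]; exact .neutral (.var j)
termination_by sizeOf A + sizeOf B

theorem neutral_collapse (A : Ty) {t : Trm} (ht : Neutral t) : Neutral (collapse A t) := by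
  cases A with
  | var => rwa [collapse]
  | arr F B => rw [collapse]; exact neutral_collapse B (.app ht (normal_inhabitant F))
  | all => rwa [collapse]
termination_by sizeOf A
end

mutual
theorem fv_inhabitant (A : Ty) : fv (inhabitant A) = ∅ := by
  cases A with
  | var => rw [inhabitant]; simp [fv]
  | all => rw [inhabitant]; simp [fv]
  | arr A B =>
    rw [inhabitant]
    split_ifs
    · simp [fv, fv_inhabitant B]
    · simp [fv, fv_ofHyp A B 0]
termination_by sizeOf A

theorem fv_ofHyp (A B : Ty) (j : ℕ) : fv (ofHyp A B j) = {j} := by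
  cases B with
  | var => rw [ofHyp, fv_collapse]; rfl
  | arr F C => rw [ofHyp]; ext n; simp [fv, fv_ofHyp A C (j + 1)]
  | all => rw [ofHyp]; rfl
termination_by sizeOf A + sizeOf B

theorem fv_collapse (A : Ty) (t : Trm) : fv (collapse A t) = fv t := by
  cases A with
  | var => rw [collapse]
  | arr F B => rw [collapse, fv_collapse B]; simp [fv, fv_inhabitant F]
  | all => rw [collapse]
termination_by sizeOf A
end

mutual
theorem typing_inhabitant {A : Ty} (hA : A.PureImp) (hbot : A.HoldsAtBot) {Γ : List Ty}
    (hΓ : ∀ B ∈ Γ, B.Proper) : Typing Γ (inhabitant A) A := by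
  cases hA with
  | var => exact absurd hbot (not_holdsAtBot_var 0)
  | @arr A B hA hB =>
    have hAΓ : ∀ C ∈ A :: Γ, C.Proper := by simpa using ⟨hA.proper, hΓ⟩
    rw [inhabitant]
    split_ifs with hBbot
    · exact .arrI hA.proper (typing_inhabitant hB hBbot hAΓ)
    · exact .arrI hA.proper (typing_ofHyp hA (fun h => hBbot (hbot h)) hB hAΓ rfl)
termination_by sizeOf A

theorem typing_ofHyp {A B : Ty} (hA : A.PureImp) (hbot : ¬ A.HoldsAtBot) (hB : B.PureImp)
    {Γ : List Ty} (hΓ : ∀ C ∈ Γ, C.Proper) {j : ℕ} (hj : Γ[j]? = some A) :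
    Typing Γ (ofHyp A B j) B := by
  cases hB with
  | var => rw [ofHyp]; exact typing_collapse hA hbot hΓ (.ax hj hΓ)
  | @arr F C hF hC =>
    rw [ofHyp]
    exact .arrI hF.proper (typing_ofHyp hA hbot hC (by simpa using ⟨hF.proper, hΓ⟩) hj)
termination_by sizeOf A + sizeOf B

theorem typing_collapse {A : Ty} (hA : A.PureImp) (hbot : ¬ A.HoldsAtBot) {Γ : List Ty}
    (hΓ : ∀ B ∈ Γ, B.Proper) {t : Trm} (ht : Typing Γ t A) :
    Typing Γ (collapse A t) (.var 0) := by
  cases hA with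
  | var => rwa [collapse]
  | @arr F B hF hB =>
    have ⟨hFbot, hBbot⟩ : F.HoldsAtBot ∧ ¬ B.HoldsAtBot := Classical.not_imp.mp hbot
    rw [collapse]
    exact typing_collapse hB hBbot hΓ (.arrE ht (typing_inhabitant hF hFbot hΓ))
termination_by sizeOf A
end

theorem not_isLI_lam_of_zero_notMem {u : Trm} (h : 0 ∉ fv u) : ¬ (lam u).IsLI
  | .lam _ h0 => h h0

theorem not_isLI_lam {u : Trm} (h : ¬ u.IsLI) : ¬ (lam u).IsLI
  | .lam hu _ => h hu

theorem not_isLI_app_right {u v : Trm} (h : ¬ v.IsLI) : ¬ (app u v).IsLI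
  | .app _ hv => h hv

theorem IsLI.of_collapse {A : Ty} {t : Trm} (h : (collapse A t).IsLI) : t.IsLI := by
  induction A generalizing t with
  | var => rwa [collapse] at h
  | arr F B _ ih =>
    rw [collapse] at h
    cases ih h with
    | app ht _ => exact ht
  | all => rwa [collapse] at h

theorem not_isLI_ofHyp_arr (A F C : Ty) (j : ℕ) : ¬ (ofHyp A (.arr F C) j).IsLI := by
  rw [ofHyp]
  exact not_isLI_lam_of_zero_notMem (by simp [fv_ofHyp])

theorem exists_body_not_isLI {A B : Ty} (hA : A.PureImp) (hB : B.PureImp)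
    (hbot : (Ty.arr A B).HoldsAtBot) (hne : Ty.arr A B ≠ .arr (.var 0) (.var 0)) :
    ∃ u : Trm, Normal u ∧ fv u ⊆ {0} ∧ Typing [A] u B ∧ ¬ (lam u).IsLI := by
  have hΓ : ∀ C ∈ [A], C.Proper := by simpa using hA.proper
  by_cases hBbot : B.HoldsAtBot
  · exact ⟨inhabitant B, normal_inhabitant B, by simp [fv_inhabitant],
      typing_inhabitant hB hBbot hΓ, not_isLI_lam_of_zero_notMem (by simp [fv_inhabitant])⟩
  have hAbot : ¬ A.HoldsAtBot := fun h => hBbot (hbot h)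
  cases hB with
  | @arr F C hF hC =>
    exact ⟨ofHyp A (.arr F C) 0, normal_ofHyp A _ 0, by simp [fv_ofHyp],
      typing_ofHyp hA hAbot (.arr hF hC) hΓ rfl, not_isLI_lam (not_isLI_ofHyp_arr A F C 0)⟩
  | var =>
    cases hA with
    | var => exact absurd rfl hne
    | @arr F C hF hC =>
      -- `F` is true at `⊥`, hence an arrow, so a proof of it built by `ofHyp` is not a λI-term.
      have ⟨hFbot, hCbot⟩ : F.HoldsAtBot ∧ ¬ C.HoldsAtBot := Classical.not_imp.mp hAbot
      cases hF with
      | var => exact absurd hFbot (not_holdsAtBot_var 0)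
      | @arr F₁ F₂ hF₁ hF₂ =>
        have hA : (Ty.arr (.arr F₁ F₂) C).PureImp := .arr (.arr hF₁ hF₂) hC
        let p := ofHyp (.arr (.arr F₁ F₂) C) (.arr F₁ F₂) 0
        refine ⟨collapse C (app (var 0) p),
          .neutral (neutral_collapse C (.app (.var 0) (normal_ofHyp _ _ 0))),
          by simp [fv_collapse, fv, p, fv_ofHyp],
          typing_collapse hC hCbot hΓ
            (.arrE (.ax rfl hΓ) (typing_ofHyp hA hAbot (.arr hF₁ hF₂) hΓ rfl)),
          not_isLI_lam fun h => not_isLI_app_right (not_isLI_ofHyp_arr _ _ _ 0) h.of_collapse⟩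

theorem exists_closed_typing_all_not_isLI {E : Ty} (hE : E.PureImp) (hbot : E.HoldsAtBot)
    (hne : E ≠ .arr (.var 0) (.var 0)) :
    ∃ w : Trm, BetaNormal w ∧ w.Closed ∧ Typing [] w (.all E) ∧ ¬ w.IsLI := by
  cases hE with
  | var => exact absurd hbot (not_holdsAtBot_var 0)
  | @arr A B hA hB =>
    obtain ⟨u, hnf, hfv, hty, hLI⟩ := exists_body_not_isLI hA hB hbot hne
    refine ⟨lam u, (Normal.lam hnf).betaNormal, ?_,
      .allI (hA.arr hB).zero_mem_tfv (.arrI hA.proper hty), hLI⟩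
    refine Set.eq_empty_iff_forall_notMem.mpr fun n hn => ?_
    exact Nat.succ_ne_zero n (hfv hn)

end Trm

/-- a demonstrable I-type with exactly one quantifier is ∀X {X → X}. -/
theorem stmt18 (D : Ty) (h1 : IType D) (h2 : (Lam D).Nonempty) (h3 : qCount D = 1) :
    D = Ty.all (Ty.arr (Ty.var 0) (Ty.var 0)) := by
  obtain ⟨E, rfl, hE⟩ := Ty.exists_eq_all_pureImp h1.1 h3
  obtain ⟨t, -, -, ht⟩ := h2
  congr 1
  by_contra hne
  obtain ⟨w, hnf, hcl, hw, hLI⟩ :=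
    Trm.exists_closed_typing_all_not_isLI hE (Ty.holdsAtBot_of_typing_all ht) hne
  exact hLI (h1.2 w hnf hcl hw)
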